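/- The function g̃(t) = k(t) - t^{-α₀}/Γ(1-α₀) extends continuously to t = 0 with g̃(0) = 0, and g̃ ∈ L¹(0,T) with g̃' ∈ L¹(0,T). -/

import Mathlib

open MeasureTheory Set Real Filter
open scoped Topology

/-!
With `ψ = 1 / Γ(1 - α)`, which is `C¹` because `1 / Γ` is entire, one has for `t > 0`
`g̃(t) = t^{-α₀} h(t)` where `h(t) = t^{α₀ - α(t)} ψ(t) - ψ(0)`. As `α` is Lipschitz, the
exponent `(α₀ - α(t)) log t` is `O(t |log t|)`, hence bounded on `(0, T]`, and this gives
`|h(t)| ≲ t (1 + |log t|)` and `|h'(t)| ≲ 1 + |log t|`. Consequently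
`|g̃(t)| ≲ t^{1-α₀} (1 + |log t|)` and `|g̃'(t)| ≲ t^{-α₀} (1 + |log t|)`: both majorants are
integrable near `0` because `α₀ < 1`, and the first one tends to `0`.
-/

theorem Real.contDiff_inv_Gamma {n : WithTop ℕ∞} : ContDiff ℝ n fun x : ℝ => (Gamma x)⁻¹ := by
  have h : (fun x : ℝ => (Gamma x)⁻¹) = fun x : ℝ => (Complex.Gamma x)⁻¹.re := by
    ext x
    rw [Complex.Gamma_ofReal, ← Complex.ofReal_inv, Complex.ofReal_re]
  rw [h]
  exact (Complex.differentiable_one_div_Gamma.contDiff (n := n)).real_of_complex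

theorem abs_exp_sub_one_le_exp_abs_mul_abs (x : ℝ) : |exp x - 1| ≤ exp |x| * |x| := by
  have h := (convex_Icc (-|x|) |x|).norm_image_sub_le_of_norm_deriv_le (C := exp |x|)
    (fun y _ => differentiableAt_exp) (fun y hy => ?_)
    (⟨neg_nonpos.2 (abs_nonneg x), abs_nonneg x⟩ : (0 : ℝ) ∈ Icc (-|x|) |x|)
    ⟨neg_abs_le x, le_abs_self x⟩
  · simpa using h
  · rw [Real.deriv_exp, norm_of_nonneg (exp_pos y).le]
    exact exp_le_exp.2 hy.2

theorem mul_abs_log_le {t T : ℝ} (ht : 0 < t) (htT : t ≤ T) : t * |log t| ≤ 1 + T * |log T| := by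
  rcases le_or_gt t 1 with h1 | h1
  · have := abs_log_mul_self_lt t ht h1
    rw [abs_mul, abs_of_pos ht] at this
    nlinarith [mul_nonneg (ht.trans_le htT).le (abs_nonneg (log T))]
  · rw [abs_of_nonneg (log_nonneg h1.le)]
    have : log t ≤ |log T| := (log_le_log ht htT).trans (le_abs_self _)
    nlinarith [log_nonneg h1.le]

theorem abs_log_le_rpow_neg_div_add {t T ε : ℝ} (ht : 0 < t) (htT : t ≤ T) (hε : 0 < ε) :
    |log t| ≤ t ^ (-ε) / ε + |log T| := by
  rcases le_or_gt t 1 with h1 | h1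
  · have h := abs_log_mul_self_rpow_lt t ε ht h1 hε
    rw [abs_mul, abs_of_pos (rpow_pos_of_pos ht ε), ← lt_div_iff₀ (rpow_pos_of_pos ht ε),
      div_div, one_div, mul_comm, mul_inv, ← rpow_neg ht.le, ← div_eq_mul_inv] at h
    linarith [abs_nonneg (log T)]
  · rw [abs_of_nonneg (log_nonneg h1.le)]
    have := (log_le_log ht htT).trans (le_abs_self _)
    have : 0 ≤ t ^ (-ε) / ε := by positivity
    linarith

theorem integrableOn_rpow_mul_one_add_abs_log {s T : ℝ} (hs : -1 < s) :
    IntegrableOn (fun t => t ^ s * (1 + |log t|)) (Ioo 0 T) := by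
  set ε := (s + 1) / 2 with hε_def
  have hε : 0 < ε := by linarith
  have hmaj : IntegrableOn (fun t => (1 + |log T|) * t ^ s + t ^ (s - ε) / ε) (Ioo 0 T) := by
    refine (IntervalIntegrable.add ?_ ?_).def'.mono_set (Ioo_subset_Ioc_self.trans Ioc_subset_uIoc)
    · exact (intervalIntegral.intervalIntegrable_rpow' hs).const_mul _
    · exact (intervalIntegral.intervalIntegrable_rpow' (by linarith)).div_const _
  refine hmaj.mono' (by fun_prop) (ae_restrict_of_forall_mem measurableSet_Ioo fun t ht => ?_)
  have hts := rpow_nonneg ht.1.le s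
  rw [norm_of_nonneg (by positivity)]
  calc t ^ s * (1 + |log t|) ≤ t ^ s * (1 + (t ^ (-ε) / ε + |log T|)) := by
        gcongr; exact abs_log_le_rpow_neg_div_add ht.1 ht.2.le hε
    _ = (1 + |log T|) * t ^ s + t ^ (s - ε) / ε := by
        rw [sub_eq_add_neg, rpow_add ht.1]; ring

theorem tendsto_rpow_mul_one_add_abs_log_nhdsGT_zero {s : ℝ} (hs : 0 < s) :
    Tendsto (fun t => t ^ s * (1 + |log t|)) (𝓝[>] 0) (𝓝 0) := by
  have h₁ : Tendsto (fun t : ℝ => t ^ s) (𝓝[>] 0) (𝓝 0) := by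
    simpa [zero_rpow hs.ne'] using
      (continuousAt_rpow_const 0 s (Or.inr hs.le)).tendsto.mono_left nhdsWithin_le_nhds
  have h₂ : Tendsto (fun t : ℝ => t ^ s * |log t|) (𝓝[>] 0) (𝓝 0) := by
    refine (neg_zero (G := ℝ) ▸ (tendsto_log_mul_rpow_nhdsGT_zero hs).neg).congr' ?_
    filter_upwards [Ioo_mem_nhdsGT (zero_lt_one' ℝ)] with t ht
    rw [abs_of_nonpos (log_nonpos ht.1.le ht.2.le)]
    ring
  simpa [mul_add] using h₁.add h₂

theorem ContDiff.exists_abs_le_and_abs_deriv_le {f : ℝ → ℝ} {s : Set ℝ} (hf : ContDiff ℝ 1 f)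
    (hs : IsCompact s) : ∃ K, ∀ x ∈ s, |f x| ≤ K ∧ |deriv f x| ≤ K := by
  obtain ⟨K₀, h₀⟩ := hs.exists_bound_of_continuousOn hf.continuous.continuousOn
  obtain ⟨K₁, h₁⟩ := hs.exists_bound_of_continuousOn (hf.continuous_deriv le_rfl).continuousOn
  exact ⟨max K₀ K₁, fun x hx => ⟨(h₀ x hx).trans (le_max_left _ _),
    (h₁ x hx).trans (le_max_right _ _)⟩⟩

theorem abs_sub_apply_zero_le_of_abs_deriv_le {f : ℝ → ℝ} {K T t : ℝ} (hf : Differentiable ℝ f)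
    (hK : ∀ x ∈ Icc 0 T, |deriv f x| ≤ K) (ht : t ∈ Icc 0 T) : |f t - f 0| ≤ K * t := by
  simpa [abs_of_nonneg ht.1] using (convex_Icc 0 T).norm_image_sub_le_of_norm_deriv_le
    (fun x _ => hf x) hK ⟨le_rfl, ht.1.trans ht.2⟩ ht

theorem abs_mul_log_le {x K t : ℝ} (hx : |x| ≤ K * t) : |x * log t| ≤ K * (t * |log t|) := by
  rw [abs_mul, ← mul_assoc]
  exact mul_le_mul_of_nonneg_right hx (abs_nonneg _)

theorem rpow_neg_eq_rpow_neg_mul_exp {s : ℝ} (hs : 0 < s) (a b : ℝ) :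
    s ^ (-b) = s ^ (-a) * exp ((a - b) * log s) := by
  rw [rpow_def_of_pos hs, rpow_def_of_pos hs, ← exp_add]
  ring_nf

section
variable {α ψ : ℝ → ℝ} {K B t : ℝ}

theorem abs_exp_mul_log_mul_sub_le (hK : 1 ≤ K) (hB : t * |log t| ≤ B)
    (hα : |α t - α 0| ≤ K * t) (hψ : |ψ t| ≤ K) (hψ₀ : |ψ t - ψ 0| ≤ K * t) :
    |exp ((α 0 - α t) * log t) * ψ t - ψ 0| ≤ 2 * exp (K * B) * K ^ 2 * (t * (1 + |log t|)) := by
  set y := (α 0 - α t) * log t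
  have ht : 0 ≤ t := by nlinarith [abs_nonneg (α t - α 0)]
  have hlog : 0 ≤ t * |log t| := by positivity
  have hy : |y| ≤ K * (t * |log t|) := abs_mul_log_le (by rwa [abs_sub_comm])
  have hE : 1 ≤ exp (K * B) := one_le_exp (by nlinarith)
  have hexp : |exp y - 1| ≤ exp (K * B) * (K * (t * |log t|)) :=
    (abs_exp_sub_one_le_exp_abs_mul_abs y).trans <| mul_le_mul
      (exp_le_exp.2 (hy.trans (by gcongr))) hy (abs_nonneg y) (exp_pos _).le
  calc |exp y * ψ t - ψ 0| = |(exp y - 1) * ψ t + (ψ t - ψ 0)| := by ring_nf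
    _ ≤ exp (K * B) * (K * (t * |log t|)) * K + K * t := by
        grw [abs_add_le, abs_mul, hexp, hψ, hψ₀]
    _ ≤ 2 * exp (K * B) * K ^ 2 * (t * (1 + |log t|)) := by
        have : K * t ≤ exp (K * B) * K ^ 2 * t := by gcongr; nlinarith
        have hC : 0 ≤ exp (K * B) * K ^ 2 := by positivity
        nlinarith [mul_nonneg hC ht, mul_nonneg hC hlog]

theorem abs_deriv_exp_mul_log_mul_sub_le (ht : 0 < t) (hK : 1 ≤ K) (hB : t * |log t| ≤ B)
    (hαd : DifferentiableAt ℝ α t) (hψd : DifferentiableAt ℝ ψ t) (hα : |α t - α 0| ≤ K * t)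
    (hα' : |deriv α t| ≤ K) (hψ : |ψ t| ≤ K) (hψ' : |deriv ψ t| ≤ K) :
    |deriv (fun s => exp ((α 0 - α s) * log s) * ψ s - ψ 0) t|
      ≤ 2 * exp (K * B) * K ^ 2 * (1 + |log t|) := by
  set y := (α 0 - α t) * log t
  set u := -deriv α t * log t + (α 0 - α t) * t⁻¹
  have hd : HasDerivAt (fun s => exp ((α 0 - α s) * log s) * ψ s - ψ 0)
      (exp y * u * ψ t + exp y * deriv ψ t) t := by
    refine ((((hasDerivAt_const t (α 0)).sub hαd.hasDerivAt).mul
      (hasDerivAt_log ht.ne')).exp.mul hψd.hasDerivAt).sub_const (ψ 0) |>.congr_deriv ?_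
    simp only [y, u, Pi.mul_apply, Pi.sub_apply]
    ring
  have hlog := abs_nonneg (log t)
  have hE : exp y ≤ exp (K * B) := exp_le_exp.2 <| (le_abs_self y).trans <|
    (abs_mul_log_le (by rwa [abs_sub_comm])).trans (by gcongr)
  have hu : |u| ≤ K * (1 + |log t|) := by
    have h₁ : |(α 0 - α t) * t⁻¹| ≤ K := by
      rw [abs_mul, abs_inv, abs_of_pos ht, abs_sub_comm, ← div_eq_mul_inv, div_le_iff₀ ht]
      exact hα
    calc |u| ≤ |deriv α t| * |log t| + |(α 0 - α t) * t⁻¹| := by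
          grw [abs_add_le, abs_mul, abs_neg]
      _ ≤ K * (1 + |log t|) := by nlinarith
  rw [hd.deriv]
  calc |exp y * u * ψ t + exp y * deriv ψ t|
      ≤ exp (K * B) * (K * (1 + |log t|)) * K + exp (K * B) * K := by
        grw [abs_add_le, abs_mul, abs_mul, abs_mul, abs_of_pos (exp_pos y), hE, hu, hψ, hψ']
    _ ≤ 2 * exp (K * B) * K ^ 2 * (1 + |log t|) := by
        have hE₀ := (exp_pos (K * B)).le
        have hKK : exp (K * B) * K ≤ exp (K * B) * K ^ 2 := by gcongr; nlinarith
        nlinarith [mul_nonneg (mul_nonneg hE₀ (sq_nonneg K)) hlog]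

end

theorem abs_deriv_rpow_neg_mul_le {h : ℝ → ℝ} {a C t : ℝ} (ht : 0 < t)
    (hd : DifferentiableAt ℝ h t) (hh : |h t| ≤ C * (t * (1 + |log t|)))
    (hh' : |deriv h t| ≤ C * (1 + |log t|)) :
    |deriv (fun s => s ^ (-a) * h s) t| ≤ (|a| + 1) * C * (t ^ (-a) * (1 + |log t|)) := by
  have hd : HasDerivAt (fun s => s ^ (-a) * h s)
      (t ^ (-a) * (-a * (h t / t) + deriv h t)) t := by
    refine ((hasDerivAt_rpow_const (Or.inl ht.ne')).mul hd.hasDerivAt).congr_deriv ?_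
    rw [rpow_sub_one ht.ne']
    ring
  have hht : |h t / t| ≤ C * (1 + |log t|) := by
    rw [abs_div, abs_of_pos ht, div_le_iff₀ ht]
    linarith
  have hC : 0 ≤ C * (1 + |log t|) := (abs_nonneg _).trans hh'
  rw [hd.deriv, abs_mul, abs_of_pos (rpow_pos_of_pos ht _)]
  calc t ^ (-a) * |-a * (h t / t) + deriv h t|
      ≤ t ^ (-a) * (|a| * (C * (1 + |log t|)) + C * (1 + |log t|)) := by
        grw [abs_add_le, abs_mul, abs_neg, hht, hh']
    _ = (|a| + 1) * C * (t ^ (-a) * (1 + |log t|)) := by ring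

theorem abs_rpow_neg_mul_le {h : ℝ → ℝ} {a C t : ℝ} (ht : 0 < t)
    (hh : |h t| ≤ C * (t * (1 + |log t|))) :
    |t ^ (-a) * h t| ≤ C * (t ^ (1 - a) * (1 + |log t|)) := by
  rw [abs_mul, abs_of_pos (rpow_pos_of_pos ht _), ← neg_add_eq_sub, rpow_add_one ht.ne']
  calc t ^ (-a) * |h t| ≤ t ^ (-a) * (C * (t * (1 + |log t|))) := by gcongr
    _ = C * (t ^ (-a) * t * (1 + |log t|)) := by ring

theorem exists_abs_rpow_neg_mul_sub_le {α ψ : ℝ → ℝ} (hα : ContDiff ℝ 1 α)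
    (hψ : ContDiff ℝ 1 ψ) (T : ℝ) : ∃ Q, ∀ t ∈ Ioo 0 T,
      |t ^ (-α t) * ψ t - t ^ (-α 0) * ψ 0| ≤ Q * (t ^ (1 - α 0) * (1 + |log t|)) ∧
      |deriv (fun s => s ^ (-α s) * ψ s - s ^ (-α 0) * ψ 0) t|
        ≤ Q * (t ^ (-α 0) * (1 + |log t|)) := by
  obtain ⟨Kα, hKα⟩ := hα.exists_abs_le_and_abs_deriv_le (isCompact_Icc (a := 0) (b := T))
  obtain ⟨Kψ, hKψ⟩ := hψ.exists_abs_le_and_abs_deriv_le (isCompact_Icc (a := 0) (b := T))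
  set K := max (max Kα Kψ) 1
  have hK : 1 ≤ K := le_max_right _ _
  have hKα_le : Kα ≤ K := le_max_of_le_left (le_max_left _ _)
  have hKψ_le : Kψ ≤ K := le_max_of_le_left (le_max_right _ _)
  set C := 2 * exp (K * (1 + T * |log T|)) * K ^ 2
  set h := fun s => exp ((α 0 - α s) * log s) * ψ s - ψ 0
  refine ⟨(|α 0| + 1) * C, fun t ht => ?_⟩
  have htT : t ∈ Icc 0 T := Ioo_subset_Icc_self ht
  have hB := mul_abs_log_le ht.1 ht.2.le
  have hα_sub := abs_sub_apply_zero_le_of_abs_deriv_le (hα.differentiable one_ne_zero)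
    (fun x hx => (hKα x hx).2.trans hKα_le) htT
  have hψ_sub := abs_sub_apply_zero_le_of_abs_deriv_le (hψ.differentiable one_ne_zero)
    (fun x hx => (hKψ x hx).2.trans hKψ_le) htT
  have hh : |h t| ≤ C * (t * (1 + |log t|)) := abs_exp_mul_log_mul_sub_le hK hB hα_sub
    ((hKψ t htT).1.trans hKψ_le) hψ_sub
  have hh' : |deriv h t| ≤ C * (1 + |log t|) := abs_deriv_exp_mul_log_mul_sub_le ht.1 hK hB
    (hα.differentiable one_ne_zero t) (hψ.differentiable one_ne_zero t) hα_sub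
    ((hKα t htT).2.trans hKα_le) ((hKψ t htT).1.trans hKψ_le) ((hKψ t htT).2.trans hKψ_le)
  have heq : (fun s => s ^ (-α s) * ψ s - s ^ (-α 0) * ψ 0) =ᶠ[𝓝 t]
      fun s => s ^ (-α 0) * h s := by
    filter_upwards [Ioi_mem_nhds ht.1] with s hs
    rw [rpow_neg_eq_rpow_neg_mul_exp hs (α 0) (α s)]
    ring
  have hd : DifferentiableAt ℝ h t := by
    have := hα.differentiable one_ne_zero
    have := hψ.differentiable one_ne_zero
    fun_prop (disch := exact ht.1.ne')
  have hC : 0 ≤ C := by positivity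
  rw [heq.eq_of_nhds, heq.deriv_eq]
  refine ⟨(abs_rpow_neg_mul_le ht.1 hh).trans ?_, abs_deriv_rpow_neg_mul_le ht.1 hd hh hh'⟩
  have hX : 0 ≤ C * (t ^ (1 - α 0) * (1 + |log t|)) :=
    mul_nonneg hC (mul_nonneg (rpow_nonneg ht.1.le _) (by positivity))
  nlinarith [mul_nonneg (abs_nonneg (α 0)) hX]

theorem integrableOn_Ioc_of_abs_le_rpow_mul_one_add_abs_log {f : ℝ → ℝ} {s Q T : ℝ} (hs : -1 < s)
    (hf : AEStronglyMeasurable f (volume.restrict (Ioo 0 T)))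
    (hbound : ∀ t ∈ Ioo 0 T, |f t| ≤ Q * (t ^ s * (1 + |log t|))) :
    IntegrableOn f (Ioc 0 T) := by
  rw [integrableOn_Ioc_iff_integrableOn_Ioo]
  exact ((integrableOn_rpow_mul_one_add_abs_log hs).const_mul Q).mono' hf
    (ae_restrict_of_forall_mem measurableSet_Ioo hbound)

theorem stmt_4_general (T : ℝ) (hT : 0 < T) (α : ℝ → ℝ)
    (hα : ContDiff ℝ 2 α)
    (hrange : ∀ z ∈ Icc (0:ℝ) T, α z ∈ Ioo (0:ℝ) 1)
    (g : ℝ → ℝ)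
    (hg : ∀ t ∈ Ioc (0:ℝ) T,
      g t = t ^ (-(α t)) / Real.Gamma (1 - α t)
              - t ^ (-(α 0)) / Real.Gamma (1 - α 0)) :
    Tendsto g (nhdsWithin 0 (Ioi 0)) (nhds 0) ∧
      IntegrableOn g (Ioc 0 T) ∧
      IntegrableOn (deriv g) (Ioc 0 T) := by
  have ha : 0 < 1 - α 0 := sub_pos.2 (hrange 0 ⟨le_rfl, hT.le⟩).2
  have hα₁ : ContDiff ℝ 1 α := hα.of_le (by norm_num)
  set ψ := fun s => (Gamma (1 - α s))⁻¹
  have hψ : ContDiff ℝ 1 ψ := contDiff_inv_Gamma.comp (contDiff_const.sub hα₁)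
  obtain ⟨Q, hQ⟩ := exists_abs_rpow_neg_mul_sub_le hα₁ hψ T
  set φ := fun s => s ^ (-α s) * ψ s - s ^ (-α 0) * ψ 0
  have hgφ : EqOn g φ (Ioo 0 T) := fun t ht => by
    simp only [hg t (Ioo_subset_Ioc_self ht), div_eq_mul_inv, φ, ψ]
  have hφ : Measurable φ := by
    have := hα₁.continuous.measurable
    have := hψ.continuous.measurable
    fun_prop
  refine ⟨?_, ?_, ?_⟩
  · refine squeeze_zero_norm' ?_ (by simpa using
      (tendsto_rpow_mul_one_add_abs_log_nhdsGT_zero ha).const_mul Q)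
    filter_upwards [Ioo_mem_nhdsGT hT] with t ht
    exact hgφ ht ▸ (hQ t ht).1
  · refine integrableOn_Ioc_of_abs_le_rpow_mul_one_add_abs_log (s := 1 - α 0) (Q := Q)
      (by linarith) (hφ.aestronglyMeasurable.congr (ae_restrict_of_forall_mem measurableSet_Ioo
        fun t ht => (hgφ ht).symm)) fun t ht => ?_
    rw [hgφ ht]
    exact (hQ t ht).1
  · refine integrableOn_Ioc_of_abs_le_rpow_mul_one_add_abs_log (s := -α 0) (Q := Q)
      (by linarith) (measurable_deriv g).aestronglyMeasurable fun t ht => ?_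
    rw [(hgφ.eventuallyEq_of_mem (isOpen_Ioo.mem_nhds ht)).deriv_eq]
    exact (hQ t ht).2

/-- The perturbation term `g̃(t) = k(t) - t^{-α₀}/Γ(1-α₀)` extends continuously
to `t = 0` with value `0`, and `g̃ ∈ L¹(0,T)` with `g̃' ∈ L¹(0,T)`. -/
theorem stmt_4 (T : ℝ) (hT : 0 < T) (α : ℝ → ℝ)
    (hα : ContDiff ℝ 2 α)
    (hbd : ∃ M, ∀ z ∈ Icc (0:ℝ) T, |iteratedDeriv 2 α z| ≤ M)
    (hrange : ∀ z ∈ Icc (0:ℝ) T, α z ∈ Ioo (0:ℝ) 1)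
    (g : ℝ → ℝ)
    (hg : ∀ t ∈ Ioc (0:ℝ) T,
      g t = t ^ (-(α t)) / Real.Gamma (1 - α t)
              - t ^ (-(α 0)) / Real.Gamma (1 - α 0)) :
    Tendsto g (nhdsWithin 0 (Ioi 0)) (nhds 0) ∧
      IntegrableOn g (Ioc 0 T) ∧
      IntegrableOn (deriv g) (Ioc 0 T) :=
  stmt_4_general T hT α hα hrange g hg
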